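/- Let (f,φ) be a classical solution of the reformulated Nordström–Vlasov system as in the context. Define the local energy e(t,x) = ∫_{ℝ³} √(e^{2φ(t,x)}+|p|²) f(t,x,p) dp + (1/2)(∂_tφ(t,x))² + (1/2)|∇_xφ(t,x)|² and the local momentum q(t,x) = ∫_{ℝ³} p f(t,x,p) dp − ∂_tφ(t,x) ∇_xφ(t,x). Then the local energy conservation law ∂_t e(t,x) + div_x q(t,x) = 0 holds at every point (t,x) ∈ ℝ×ℝ³. -/

import Mathlib

/-!
Write `p⁰ = √(e^{2φ} + |p|²)`. Multiplying the Vlasov equation by `p⁰` gives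
`∂ₜ(p⁰ f) + p · ∇ₓ f = e^{2φ} ∂ₜφ f / p⁰ + e^{2φ} ∇ₓφ · ∇ₚ f`, and the last term integrates to
zero in `p` because `f` has compact support in momentum. The field terms of `∂ₜ e + divₓ q`
reduce, by the symmetry `∂ₜ∂ᵢφ = ∂ᵢ∂ₜφ`, to `∂ₜφ (∂ₜ²φ - Δφ)`, which by the wave equation is
`-e^{2φ} ∂ₜφ ∫ f / p⁰` and cancels the matter source term.
-/

open MeasureTheory Real

noncomputable section

/-- Euclidean 3-space. -/
abbrev E3 := EuclideanSpace ℝ (Fin 3)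

/-- Partial derivative of `g` at `x` in the `i`-th coordinate direction. -/
def pd (g : E3 → ℝ) (x : E3) (i : Fin 3) : ℝ :=
  fderiv ℝ g x (EuclideanSpace.single i 1)

/-- `(f, φ)` is a classical solution of the reformulated Nordström–Vlasov system:
`f` is `C¹` and nonnegative, `φ` is `C²`, the Vlasov equation and the wave equation hold
pointwise, and `f` has locally uniformly compact support in the momentum variable. -/
def NVSystem (f : ℝ → E3 → E3 → ℝ) (φ : ℝ → E3 → ℝ) : Prop :=
  (ContDiff ℝ 1 (fun w : ℝ × E3 × E3 => f w.1 w.2.1 w.2.2)) ∧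
  (∀ t x p, 0 ≤ f t x p) ∧
  (ContDiff ℝ 2 (fun w : ℝ × E3 => φ w.1 w.2)) ∧
  (∀ (t : ℝ) (x p : E3),
    deriv (fun s => f s x p) t
    + (∑ i, (p i / Real.sqrt (Real.exp (2 * φ t x) + ‖p‖ ^ 2)) * pd (fun y => f t y p) x i)
    - (∑ i, pd (fun y => Real.sqrt (Real.exp (2 * φ t y) + ‖p‖ ^ 2)) x i
        * pd (fun w => f t x w) p i) = 0) ∧
  (∀ (t : ℝ) (x : E3),
    deriv (fun s => deriv (fun s' => φ s' x) s) t - (∑ i, pd (fun y => pd (φ t) y i) x i)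
    = - Real.exp (2 * φ t x)
        * ∫ p : E3, f t x p / Real.sqrt (Real.exp (2 * φ t x) + ‖p‖ ^ 2)) ∧
  (∀ K : Set (ℝ × E3), IsCompact K →
    ∃ R > (0 : ℝ), ∀ (t : ℝ) (x p : E3), (t, x) ∈ K → R ≤ ‖p‖ → f t x p = 0)

open Topology Filter Set Function

section ParametricIntegral

variable {X E : Type*} [NormedAddCommGroup X] [NormedSpace ℝ X] [ProperSpace X]
  [TopologicalSpace E] [T2Space E] [SecondCountableTopology E] [MeasurableSpace E]
  [OpensMeasurableSpace E] {μ : Measure E} [IsFiniteMeasureOnCompacts μ]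

theorem hasFDerivAt_integral_of_eventually_eq_zero_off_compact
    {H : X → E → ℝ} {H' : X → E → X →L[ℝ] ℝ} {x₀ : X} {K : Set E} (hK : IsCompact K)
    (hH : Continuous (uncurry H)) (hH' : Continuous (uncurry H'))
    (hderiv : ∀ x p, HasFDerivAt (H · p) (H' x p) x)
    (hvanish : ∀ᶠ x in 𝓝 x₀, ∀ p ∉ K, H x p = 0) :
    Integrable (H' x₀) μ ∧ HasFDerivAt (fun x => ∫ p, H x p ∂μ) (∫ p, H' x₀ p ∂μ) x₀ := by
  obtain ⟨r, hr, hball⟩ := Metric.eventually_nhds_iff_ball.1 (eventually_eventually_nhds.2 hvanish)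
  have hH'_zero : ∀ x ∈ Metric.ball x₀ r, ∀ p ∉ K, H' x p = 0 := fun x hx p hp =>
    (hderiv x p).unique <| (hasFDerivAt_const 0 x).congr_of_eventuallyEq <|
      (hball x hx).mono fun y hy => hy p hp
  obtain ⟨M, hM⟩ := ((isCompact_closedBall x₀ r).prod hK).exists_bound_of_continuousOn
    hH'.continuousOn
  have hbound : ∀ x ∈ Metric.ball x₀ r, ∀ p, ‖H' x p‖ ≤ K.indicator (fun _ => M) p := by
    intro x hx p
    by_cases hp : p ∈ K
    · rw [indicator_of_mem hp]
      exact hM (x, p) ⟨Metric.ball_subset_closedBall hx, hp⟩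
    · rw [indicator_of_notMem hp, hH'_zero x hx p hp, norm_zero]
  have hslice : ∀ x, Continuous (H x) := fun x => hH.comp (Continuous.prodMk_right x)
  have hint : Integrable (H x₀) μ := (hslice x₀).integrable_of_hasCompactSupport <|
    HasCompactSupport.intro hK (hball x₀ (Metric.mem_ball_self hr)).self_of_nhds
  refine ⟨(hH'.comp (Continuous.prodMk_right x₀)).integrable_of_hasCompactSupport <|
    HasCompactSupport.intro hK (hH'_zero x₀ (Metric.mem_ball_self hr)), ?_⟩
  exact hasFDerivAt_integral_of_dominated_of_fderiv_le (Metric.ball_mem_nhds x₀ hr)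
    (Eventually.of_forall fun x => (hslice x).aestronglyMeasurable) hint
    (hH'.comp (Continuous.prodMk_right x₀)).aestronglyMeasurable
    (Eventually.of_forall fun p x hx => hbound x hx p)
    ((integrable_indicator_iff hK.measurableSet).2 (integrableOn_const hK.measure_ne_top))
    (Eventually.of_forall fun p x _ => hderiv x p)

theorem hasDerivAt_integral_of_eventually_eq_zero_off_compact
    {H H' : ℝ → E → ℝ} {t₀ : ℝ} {K : Set E} (hK : IsCompact K)
    (hH : Continuous (uncurry H)) (hH' : Continuous (uncurry H'))
    (hderiv : ∀ t p, HasDerivAt (H · p) (H' t p) t)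
    (hvanish : ∀ᶠ t in 𝓝 t₀, ∀ p ∉ K, H t p = 0) :
    Integrable (H' t₀) μ ∧ HasDerivAt (fun t => ∫ p, H t p ∂μ) (∫ p, H' t₀ p ∂μ) t₀ := by
  obtain ⟨hint, hderiv_int⟩ := hasFDerivAt_integral_of_eventually_eq_zero_off_compact (μ := μ)
    (H' := fun t p => ContinuousLinearMap.toSpanSingleton ℝ (H' t p)) hK hH
    ((ContinuousLinearMap.toSpanSingletonCLE (𝕜 := ℝ) (E := ℝ)).continuous.comp hH')
    (fun t p => (hderiv t p).hasFDerivAt) hvanish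
  refine ⟨by simpa using hint.apply_continuousLinearMap 1, ?_⟩
  simpa [ContinuousLinearMap.integral_apply hint] using hderiv_int.hasDerivAt

end ParametricIntegral

theorem integral_fderiv_apply_eq_zero {E : Type*} [NormedAddCommGroup E] [NormedSpace ℝ E]
    [FiniteDimensional ℝ E] [MeasurableSpace E] [BorelSpace E] {μ : Measure E}
    [μ.IsAddHaarMeasure] {g : E → ℝ} (hg : ContDiff ℝ 1 g) (hsupp : HasCompactSupport g)
    (v : E) : ∫ p, fderiv ℝ g p v ∂μ = 0 := by
  have hg'_int : Integrable (fun p => 1 * fderiv ℝ g p v) μ := by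
    simpa using ((hg.continuous_fderiv one_ne_zero).clm_apply continuous_const
      ).integrable_of_hasCompactSupport (hsupp.fderiv_apply (𝕜 := ℝ) v)
  have hg_int : Integrable (fun p => 1 * g p) μ := by
    simpa using hg.continuous.integrable_of_hasCompactSupport hsupp
  have hibp := integral_mul_fderiv_eq_neg_fderiv_mul_of_integrable (f := fun _ => (1 : ℝ))
    (by simp) hg'_int hg_int (fun _ _ => differentiableAt_const _)
    (fun p _ => hg.differentiable one_ne_zero p)
  simpa using hibp

section PartialDerivatives

variable {X Y G : Type*} [NormedAddCommGroup X] [NormedSpace ℝ X] [NormedAddCommGroup Y]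
  [NormedSpace ℝ Y] [NormedAddCommGroup G] [NormedSpace ℝ G] {ψ : X → Y → G}

theorem fderiv_apply_eq_fderiv_uncurry_apply_inr {x : X} {y : Y}
    (h : DifferentiableAt ℝ (uncurry ψ) (x, y)) (v : Y) :
    fderiv ℝ (ψ x) y v = fderiv ℝ (uncurry ψ) (x, y) (0, v) := by
  have hψ : HasFDerivAt (ψ x) ((fderiv ℝ (uncurry ψ) (x, y)).comp (.inr ℝ X Y)) y :=
    h.hasFDerivAt.comp y (hasFDerivAt_prodMk_right x y)
  rw [hψ.fderiv]
  rfl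

theorem fderiv_apply_eq_fderiv_uncurry_apply_inl {x : X} {y : Y}
    (h : DifferentiableAt ℝ (uncurry ψ) (x, y)) (u : X) :
    fderiv ℝ (fun x => ψ x y) x u = fderiv ℝ (uncurry ψ) (x, y) (u, 0) := by
  have hψ : HasFDerivAt (ψ · y) ((fderiv ℝ (uncurry ψ) (x, y)).comp (.inl ℝ X Y)) x :=
    h.hasFDerivAt.comp (f := (·, y)) x (hasFDerivAt_prodMk_left x y)
  rw [hψ.fderiv]
  rfl

theorem ContDiff.fderiv_partial_right {m n : WithTop ℕ∞} (h : ContDiff ℝ m (uncurry ψ))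
    (hnm : n + 1 ≤ m) : ContDiff ℝ n fun w : X × Y => fderiv ℝ (ψ w.1) w.2 :=
  ContDiff.fderiv (f := fun w : X × Y => ψ w.1)
    (h.comp (contDiff_fst.fst.prodMk contDiff_snd)) contDiff_snd hnm

theorem ContDiff.fderiv_partial_left {m n : WithTop ℕ∞} (h : ContDiff ℝ m (uncurry ψ))
    (hnm : n + 1 ≤ m) : ContDiff ℝ n fun w : X × Y => fderiv ℝ (fun x => ψ x w.2) w.1 :=
  ContDiff.fderiv (f := fun (w : X × Y) x => ψ x w.2)
    (h.comp (contDiff_snd.prodMk contDiff_fst.snd)) contDiff_fst hnm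

theorem ContDiff.differentiable_fderiv_partial_right_apply (h : ContDiff ℝ 2 (uncurry ψ))
    (v : Y) : Differentiable ℝ fun w : X × Y => fderiv ℝ (ψ w.1) w.2 v :=
  ((h.fderiv_partial_right (n := 1) (by norm_num)).differentiable one_ne_zero).clm_apply
    (differentiable_const v)

theorem ContDiff.differentiable_fderiv_partial_left_apply (h : ContDiff ℝ 2 (uncurry ψ))
    (u : X) : Differentiable ℝ fun w : X × Y => fderiv ℝ (fun x => ψ x w.2) w.1 u :=
  ((h.fderiv_partial_left (n := 1) (by norm_num)).differentiable one_ne_zero).clm_apply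
    (differentiable_const u)

theorem fderiv_fderiv_partial_right_apply (h : ContDiff ℝ 2 (uncurry ψ)) (x : X) (y : Y)
    (u : X) (v : Y) :
    fderiv ℝ (fun x => fderiv ℝ (ψ x) y v) x u
      = fderiv ℝ (fderiv ℝ (uncurry ψ)) (x, y) (u, 0) (0, v) := by
  have hD : Differentiable ℝ (fderiv ℝ (uncurry ψ)) :=
    (h.fderiv_right (m := 1) (by norm_num)).differentiable one_ne_zero
  simp only [fderiv_apply_eq_fderiv_uncurry_apply_inr (h.differentiable two_ne_zero _) v]
  rw [fderiv_apply_eq_fderiv_uncurry_apply_inl (ψ := fun x y => fderiv ℝ (uncurry ψ) (x, y) (0, v))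
    ((hD _).clm_apply (differentiableAt_const _)) u]
  change fderiv ℝ (fun w => fderiv ℝ (uncurry ψ) w (0, v)) (x, y) (u, 0) = _
  rw [fderiv_clm_apply (hD _) (differentiableAt_const _)]
  simp

theorem fderiv_fderiv_partial_left_apply (h : ContDiff ℝ 2 (uncurry ψ)) (x : X) (y : Y)
    (u : X) (v : Y) :
    fderiv ℝ (fun y => fderiv ℝ (fun x => ψ x y) x u) y v
      = fderiv ℝ (fderiv ℝ (uncurry ψ)) (x, y) (0, v) (u, 0) := by
  have hD : Differentiable ℝ (fderiv ℝ (uncurry ψ)) :=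
    (h.fderiv_right (m := 1) (by norm_num)).differentiable one_ne_zero
  simp only [fderiv_apply_eq_fderiv_uncurry_apply_inl (h.differentiable two_ne_zero _) u]
  rw [fderiv_apply_eq_fderiv_uncurry_apply_inr (ψ := fun x y => fderiv ℝ (uncurry ψ) (x, y) (u, 0))
    ((hD _).clm_apply (differentiableAt_const _)) v]
  change fderiv ℝ (fun w => fderiv ℝ (uncurry ψ) w (u, 0)) (x, y) (0, v) = _
  rw [fderiv_clm_apply (hD _) (differentiableAt_const _)]
  simp

theorem fderiv_fderiv_partial_comm (h : ContDiff ℝ 2 (uncurry ψ)) (x : X) (y : Y)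
    (u : X) (v : Y) :
    fderiv ℝ (fun x => fderiv ℝ (ψ x) y v) x u
      = fderiv ℝ (fun y => fderiv ℝ (fun x => ψ x y) x u) y v := by
  rw [fderiv_fderiv_partial_right_apply h, fderiv_fderiv_partial_left_apply h,
    h.contDiffAt.isSymmSndFDerivAt (by simp)]

end PartialDerivatives

section SqrtExp

variable {X : Type*} [NormedAddCommGroup X] [NormedSpace ℝ X]

theorem HasFDerivAt.sqrt_exp_two_mul_add {g : X → ℝ} {g' : X →L[ℝ] ℝ} {x : X}
    (hg : HasFDerivAt g g' x) {c : ℝ} (hc : 0 ≤ c) :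
    HasFDerivAt (fun y => Real.sqrt (Real.exp (2 * g y) + c))
      ((Real.exp (2 * g x) / Real.sqrt (Real.exp (2 * g x) + c)) • g') x := by
  have hpos : 0 < Real.exp (2 * g x) + c := by positivity
  convert ((hg.const_mul 2).exp.add_const c).sqrt hpos.ne' using 1
  ext v
  simp only [FunLike.coe_smul, Pi.smul_apply, smul_eq_mul]
  field_simp

theorem HasDerivAt.sqrt_exp_two_mul_add {g : ℝ → ℝ} {g' t : ℝ} (hg : HasDerivAt g g' t)
    {c : ℝ} (hc : 0 ≤ c) :
    HasDerivAt (fun s => Real.sqrt (Real.exp (2 * g s) + c))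
      (Real.exp (2 * g t) * g' / Real.sqrt (Real.exp (2 * g t) + c)) t := by
  have hpos : 0 < Real.exp (2 * g t) + c := by positivity
  convert ((hg.const_mul 2).exp.add_const c).sqrt hpos.ne' using 1
  field_simp

end SqrtExp

def particleEnergy (φ : ℝ → E3 → ℝ) (t : ℝ) (x p : E3) : ℝ :=
  Real.sqrt (Real.exp (2 * φ t x) + ‖p‖ ^ 2)

theorem particleEnergy_pos (φ : ℝ → E3 → ℝ) (t : ℝ) (x p : E3) : 0 < particleEnergy φ t x p :=
  Real.sqrt_pos.2 (by positivity)

def localEnergy (f : ℝ → E3 → E3 → ℝ) (φ : ℝ → E3 → ℝ) (t : ℝ) (x : E3) : ℝ :=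
  (∫ p : E3, particleEnergy φ t x p * f t x p) + (1/2) * (deriv (fun s => φ s x) t) ^ 2
    + (1/2) * ∑ i, (pd (φ t) x i) ^ 2

def localMomentum (f : ℝ → E3 → E3 → ℝ) (φ : ℝ → E3 → ℝ) (i : Fin 3) (t : ℝ) (x : E3) : ℝ :=
  (∫ p : E3, p i * f t x p) - deriv (fun s => φ s x) t * pd (φ t) x i

namespace NVSystem

variable {f : ℝ → E3 → E3 → ℝ} {φ : ℝ → E3 → ℝ}

theorem exists_eventually_eq_zero_off_closedBall (h : NVSystem f φ) (t : ℝ) (x : E3) :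
    ∃ R, ∀ᶠ w in 𝓝 (t, x), ∀ p ∉ Metric.closedBall (0 : E3) R, f w.1 w.2 p = 0 := by
  obtain ⟨-, -, -, -, -, hsupp⟩ := h
  obtain ⟨R, -, hR⟩ := hsupp _ (isCompact_closedBall (t, x) 1)
  refine ⟨R, ?_⟩
  filter_upwards [Metric.closedBall_mem_nhds (t, x) one_pos] with w hw p hp
  rw [mem_closedBall_zero_iff, not_le] at hp
  exact hR w.1 w.2 p hw hp.le

theorem hasCompactSupport (h : NVSystem f φ) (t : ℝ) (x : E3) : HasCompactSupport (f t x) := by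
  obtain ⟨R, hR⟩ := h.exists_eventually_eq_zero_off_closedBall t x
  exact HasCompactSupport.intro (isCompact_closedBall 0 R) hR.self_of_nhds

theorem wave (h : NVSystem f φ) (t : ℝ) (x : E3) :
    deriv (fun s => deriv (fun s' => φ s' x) s) t - ∑ i, pd (fun y => pd (φ t) y i) x i
      = -Real.exp (2 * φ t x) * ∫ p, f t x p / particleEnergy φ t x p :=
  h.2.2.2.2.1 t x

theorem deriv_pd_eq_pd_deriv (h : NVSystem f φ) (t : ℝ) (x : E3) (i : Fin 3) :
    deriv (fun s => pd (φ s) x i) t = pd (fun y => deriv (φ · y) t) x i :=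
  fderiv_fderiv_partial_comm h.2.2.1 t x 1 _

theorem hasDerivAt_integral_particleEnergy_mul (h : NVSystem f φ) (t : ℝ) (x : E3) :
    Integrable (fun p => Real.exp (2 * φ t x) * deriv (fun s => φ s x) t
        / particleEnergy φ t x p * f t x p + particleEnergy φ t x p * deriv (f · x p) t) ∧
    HasDerivAt (fun s => ∫ p, particleEnergy φ s x p * f s x p)
      (∫ p, (Real.exp (2 * φ t x) * deriv (fun s => φ s x) t
        / particleEnergy φ t x p * f t x p + particleEnergy φ t x p * deriv (f · x p) t)) t := by
  obtain ⟨R, hR⟩ := h.exists_eventually_eq_zero_off_closedBall t x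
  obtain ⟨hf, -, hφ, -, -, -⟩ := h
  have hφx : ContDiff ℝ 2 (φ · x) := hφ.comp (contDiff_id.prodMk contDiff_const)
  have hfx : ContDiff ℝ 1 (uncurry fun s p => f s x p) :=
    hf.comp (contDiff_fst.prodMk (contDiff_const.prodMk contDiff_snd))
  have hσ : Continuous fun w : ℝ × E3 => particleEnergy φ w.1 x w.2 := by
    have := hφx.continuous
    unfold particleEnergy
    fun_prop
  have hfc : Continuous fun w : ℝ × E3 => f w.1 x w.2 := hfx.continuous
  have hφt : Continuous (deriv (φ · x)) := hφx.continuous_deriv (by norm_num)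
  have hft : Continuous fun w : ℝ × E3 => deriv (f · x w.2) w.1 :=
    (hfx.fderiv_partial_left (n := 0) (by norm_num)).continuous.clm_apply continuous_const
  have hexp : Continuous fun w : ℝ × E3 => Real.exp (2 * φ w.1 x) := by
    have := hφx.continuous
    fun_prop
  have hH : Continuous (uncurry fun s p => particleEnergy φ s x p * f s x p) := hσ.mul hfc
  have hH' : Continuous (uncurry fun s p => Real.exp (2 * φ s x) * deriv (φ · x) s
      / particleEnergy φ s x p * f s x p + particleEnergy φ s x p * deriv (f · x p) s) :=
    (((hexp.mul (hφt.comp continuous_fst)).div hσ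
      fun w => (particleEnergy_pos φ _ _ _).ne').mul hfc).add (hσ.mul hft)
  refine hasDerivAt_integral_of_eventually_eq_zero_off_compact (isCompact_closedBall 0 R)
    hH hH' (fun s p => ?_)
    (((Continuous.prodMk_left x).tendsto t).eventually hR |>.mono fun s hs p hp => by
      rw [hs p hp, mul_zero])
  exact ((hφx.differentiable two_ne_zero s).hasDerivAt.sqrt_exp_two_mul_add (sq_nonneg ‖p‖)).mul
    ((hfx.comp (contDiff_id.prodMk contDiff_const)).differentiable one_ne_zero s).hasDerivAt

theorem hasFDerivAt_integral_coord_mul (h : NVSystem f φ) (t : ℝ) (x : E3) (i : Fin 3) :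
    Integrable (fun p => p i • fderiv ℝ (fun y => f t y p) x) ∧
    HasFDerivAt (fun y => ∫ p, p i * f t y p) (∫ p, p i • fderiv ℝ (fun y => f t y p) x) x := by
  obtain ⟨R, hR⟩ := h.exists_eventually_eq_zero_off_closedBall t x
  obtain ⟨hf, -⟩ := h
  have hft : ContDiff ℝ 1 (uncurry fun y p => f t y p) :=
    hf.comp (contDiff_const.prodMk contDiff_id)
  have hpi : Continuous fun w : E3 × E3 => w.2 i := by fun_prop
  have hH : Continuous (uncurry fun y p => p i * f t y p) := hpi.mul hft.continuous
  have hH' : Continuous (uncurry fun y p => p i • fderiv ℝ (fun y => f t y p) y) :=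
    hpi.smul (hft.fderiv_partial_left (n := 0) (by norm_num)).continuous
  refine hasFDerivAt_integral_of_eventually_eq_zero_off_compact (isCompact_closedBall 0 R)
    hH hH' (fun y p => ?_)
    (((Continuous.prodMk_right t).tendsto x).eventually hR |>.mono fun y hy p hp => by
      rw [hy p hp, mul_zero])
  exact ((hft.comp (contDiff_id.prodMk contDiff_const)).differentiable one_ne_zero
    y).hasFDerivAt.const_mul (p i)

theorem hasDerivAt_localEnergy (h : NVSystem f φ) (t : ℝ) (x : E3) :
    HasDerivAt (fun s => localEnergy f φ s x)
      ((∫ p, (Real.exp (2 * φ t x) * deriv (φ · x) t / particleEnergy φ t x p * f t x p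
          + particleEnergy φ t x p * deriv (f · x p) t))
        + deriv (φ · x) t * deriv (fun s => deriv (fun s' => φ s' x) s) t
        + ∑ i, pd (φ t) x i * deriv (fun s => pd (φ s) x i) t) t := by
  obtain ⟨-, hI⟩ := h.hasDerivAt_integral_particleEnergy_mul t x
  have hφ : ContDiff ℝ 2 (uncurry φ) := h.2.2.1
  have hA : DifferentiableAt ℝ (fun s => deriv (fun s' => φ s' x) s) t :=
    ((hφ.differentiable_fderiv_partial_left_apply 1).comp
      (differentiable_id.prodMk (differentiable_const x))) t
  have hB : ∀ i, DifferentiableAt ℝ (fun s => pd (φ s) x i) t := fun i =>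
    ((hφ.differentiable_fderiv_partial_right_apply _).comp
      (differentiable_id.prodMk (differentiable_const x))) t
  have hE := (hI.add ((hA.hasDerivAt.fun_pow 2).const_mul (1/2))).add
    ((HasDerivAt.fun_sum (u := Finset.univ) fun i _ => (hB i).hasDerivAt.fun_pow 2).const_mul (1/2))
  refine hE.congr_deriv ?_
  rw [Finset.mul_sum]
  norm_num
  congr 1
  · ring
  · exact Finset.sum_congr rfl fun i _ => by ring

theorem pd_localMomentum (h : NVSystem f φ) (t : ℝ) (x : E3) (i : Fin 3) :
    pd (fun y => localMomentum f φ i t y) x i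
      = (∫ p, p i * pd (fun y => f t y p) x i)
        - (pd (fun y => deriv (φ · y) t) x i * pd (φ t) x i
          + deriv (φ · x) t * pd (fun y => pd (φ t) y i) x i) := by
  obtain ⟨hint, hI⟩ := h.hasFDerivAt_integral_coord_mul t x i
  have hφ : ContDiff ℝ 2 (uncurry φ) := h.2.2.1
  have hA : DifferentiableAt ℝ (fun y => deriv (φ · y) t) x :=
    ((hφ.differentiable_fderiv_partial_left_apply 1).comp
      ((differentiable_const t).prodMk differentiable_id)) x
  have hB : DifferentiableAt ℝ (fun y => pd (φ t) y i) x :=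
    ((hφ.differentiable_fderiv_partial_right_apply _).comp
      ((differentiable_const t).prodMk differentiable_id)) x
  have hq : HasFDerivAt (fun y => localMomentum f φ i t y) _ x :=
    hI.sub (hA.hasFDerivAt.mul hB.hasFDerivAt)
  rw [pd, hq.fderiv]
  simp only [pd, sub_apply, ContinuousLinearMap.integral_apply hint, smul_apply, smul_eq_mul,
    add_apply, sub_right_inj]
  ring

theorem particleEnergy_mul_vlasov (h : NVSystem f φ) (t : ℝ) (x p : E3) :
    particleEnergy φ t x p * deriv (f · x p) t + ∑ i, p i * pd (fun y => f t y p) x i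
      = Real.exp (2 * φ t x) * ∑ i, pd (φ t) x i * pd (f t x) p i := by
  have hv : deriv (f · x p) t + ∑ i, p i / particleEnergy φ t x p * pd (fun y => f t y p) x i
      - ∑ i, pd (fun y => particleEnergy φ t y p) x i * pd (f t x) p i = 0 := h.2.2.2.1 t x p
  have hφt : HasFDerivAt (φ t) (fderiv ℝ (φ t) x) x :=
    ((h.2.2.1.comp (contDiff_const.prodMk contDiff_id)).differentiable two_ne_zero x).hasFDerivAt
  have hσ : ∀ i, pd (fun y => particleEnergy φ t y p) x i
      = Real.exp (2 * φ t x) / particleEnergy φ t x p * pd (φ t) x i := fun i => by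
    have hd : HasFDerivAt (fun y => particleEnergy φ t y p) _ x :=
      hφt.sqrt_exp_two_mul_add (sq_nonneg ‖p‖)
    rw [pd, hd.fderiv]
    rfl
  have hpos := particleEnergy_pos φ t x p
  simp only [hσ, Fin.sum_univ_three] at hv ⊢
  field_simp at hv
  linear_combination hv

theorem integral_particleEnergy_mul_vlasov (h : NVSystem f φ) (t : ℝ) (x : E3) :
    (∫ p, (Real.exp (2 * φ t x) * deriv (φ · x) t / particleEnergy φ t x p * f t x p
        + particleEnergy φ t x p * deriv (f · x p) t))
      + ∑ i, ∫ p, p i * pd (fun y => f t y p) x i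
      = Real.exp (2 * φ t x) * deriv (φ · x) t * ∫ p, f t x p / particleEnergy φ t x p := by
  obtain ⟨hI_t, -⟩ := h.hasDerivAt_integral_particleEnergy_mul t x
  have hI_x : ∀ i, Integrable (fun p => p i * pd (fun y => f t y p) x i) := fun i => by
    simpa [pd] using (h.hasFDerivAt_integral_coord_mul t x i).1.apply_continuousLinearMap
      (EuclideanSpace.single i 1)
  have hsupp := h.hasCompactSupport t x
  have hfC1 : ContDiff ℝ 1 (f t x) :=
    h.1.comp (contDiff_const.prodMk (contDiff_const.prodMk contDiff_id))
  have hI_f : Integrable (fun p => f t x p / particleEnergy φ t x p) := by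
    have hσ : Continuous (particleEnergy φ t x) := by
      unfold particleEnergy
      fun_prop
    refine (hfC1.continuous.div hσ fun p => (particleEnergy_pos φ t x p).ne'
      ).integrable_of_hasCompactSupport (hsupp.mono fun p hp hf => hp ?_)
    simp [hf]
  have hI_p : ∀ i, Integrable (fun p => pd (f t x) p i) := fun i =>
    ((hfC1.continuous_fderiv one_ne_zero).clm_apply continuous_const
      ).integrable_of_hasCompactSupport (hsupp.fderiv_apply (𝕜 := ℝ) _)
  calc _ = ∫ p, ((Real.exp (2 * φ t x) * deriv (φ · x) t / particleEnergy φ t x p * f t x p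
          + particleEnergy φ t x p * deriv (f · x p) t)
          + ∑ i, p i * pd (fun y => f t y p) x i) := by
        rw [integral_add hI_t (integrable_finsetSum _ fun i _ => hI_x i),
          integral_finsetSum _ fun i _ => hI_x i]
    _ = ∫ p, (Real.exp (2 * φ t x) * deriv (φ · x) t * (f t x p / particleEnergy φ t x p)
          + Real.exp (2 * φ t x) * ∑ i, pd (φ t) x i * pd (f t x) p i) := by
        congr 1 with p
        rw [add_assoc, h.particleEnergy_mul_vlasov]
        ring
    _ = _ := by
        rw [integral_add (hI_f.const_mul _)
          ((integrable_finsetSum _ fun i _ => (hI_p i).const_mul _).const_mul _),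
          integral_const_mul, integral_const_mul,
          integral_finsetSum _ fun i _ => (hI_p i).const_mul _]
        simp [integral_const_mul, integral_fderiv_apply_eq_zero hfC1 hsupp, pd]

end NVSystem

/-- local energy conservation ∂ₜe + div_x q = 0 for solutions of the
reformulated Nordström–Vlasov system. -/
theorem local_energy_conservation
    (f : ℝ → E3 → E3 → ℝ) (φ : ℝ → E3 → ℝ) (hsys : NVSystem f φ)
    (eloc : ℝ → E3 → ℝ) (qloc : Fin 3 → ℝ → E3 → ℝ)
    (heloc : ∀ t x, eloc t x
      = (∫ p : E3, Real.sqrt (Real.exp (2 * φ t x) + ‖p‖ ^ 2) * f t x p)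
        + (1/2) * (deriv (fun s => φ s x) t) ^ 2
        + (1/2) * ∑ i, (pd (φ t) x i) ^ 2)
    (hqloc : ∀ i t x, qloc i t x
      = (∫ p : E3, p i * f t x p) - deriv (fun s => φ s x) t * pd (φ t) x i) :
    ∀ (t : ℝ) (x : E3),
      deriv (fun s => eloc s x) t + ∑ i, pd (fun y => qloc i t y) x i = 0 := by
  obtain rfl : eloc = localEnergy f φ := funext fun t => funext (heloc t)
  obtain rfl : qloc = localMomentum f φ := funext fun i => funext fun t => funext (hqloc i t)
  intro t x
  rw [(hsys.hasDerivAt_localEnergy t x).deriv]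
  simp only [hsys.pd_localMomentum t x, hsys.deriv_pd_eq_pd_deriv t x]
  have hvlasov := hsys.integral_particleEnergy_mul_vlasov t x
  have hwave := hsys.wave t x
  simp only [Fin.sum_univ_three] at hvlasov hwave ⊢
  linear_combination hvlasov + deriv (φ · x) t * hwave
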